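/- arXiv:2108.05050 — 3 statements merged into one kernel-verified Lean document; each statement's English description precedes it below -/
import Mathlib

section
/- There exists a finite set Λ of unit vectors in ℝ^d with rational coordinates and, for each ξ ∈ Λ, a smooth non-negative function a_ξ defined on the unit sphere, such that every unit vector R ∈ ∂B₁ satisfies R = ∑_{ξ∈Λ} a_ξ(R) ξ. -/
/-- Geometric lemma: there is a finite set `Λ` of rational unit vectors in `ℝ^d` and
smooth non-negative coefficients `a_ξ` on the unit sphere such that every unit vector
`R` satisfies `R = ∑_{ξ ∈ Λ} a_ξ(R) ξ`. -/
theorem geometric_lemma (d : ℕ) (hd : 2 ≤ d) :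
    ∃ (Λ : Finset (EuclideanSpace ℝ (Fin d)))
      (a : EuclideanSpace ℝ (Fin d) → EuclideanSpace ℝ (Fin d) → ℝ),
      (∀ ξ ∈ Λ, ‖ξ‖ = 1 ∧ ∀ i, ∃ q : ℚ, ξ i = (q : ℝ)) ∧
      (∀ ξ ∈ Λ, ContDiff ℝ (⊤ : ℕ∞) (a ξ)) ∧
      (∀ ξ ∈ Λ, ∀ R : EuclideanSpace ℝ (Fin d), ‖R‖ = 1 → 0 ≤ a ξ R) ∧
      (∀ R : EuclideanSpace ℝ (Fin d), ‖R‖ = 1 → R = ∑ ξ ∈ Λ, a ξ R • ξ) := by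
  classical
  set e : Fin d → EuclideanSpace ℝ (Fin d) := fun i => EuclideanSpace.single i (1:ℝ) with he
  have hnorm : ∀ i, ‖e i‖ = 1 := by
    intro i; rw [he]; rw [EuclideanSpace.norm_single]; norm_num
  refine ⟨(Finset.univ.image e) ∪ (Finset.univ.image (fun i => -e i)),
    fun ξ R => (1 + inner ℝ ξ R)/2, ?_, ?_, ?_, ?_⟩
  · intro ξ hξ
    simp only [Finset.mem_union, Finset.mem_image, Finset.mem_univ, true_and] at hξ
    obtain ⟨i, rfl⟩ | ⟨i, rfl⟩ := hξ
    · refine ⟨hnorm i, fun j => ?_⟩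
      by_cases h : j = i
      · exact ⟨1, by simp [he, h, EuclideanSpace.single_apply]⟩
      · exact ⟨0, by simp [he, h, EuclideanSpace.single_apply]⟩
    · refine ⟨by rw [norm_neg]; exact hnorm i, fun j => ?_⟩
      by_cases h : j = i
      · exact ⟨-1, by simp [he, h, EuclideanSpace.single_apply]⟩
      · exact ⟨0, by simp [he, h, EuclideanSpace.single_apply]⟩
  · intro ξ _
    exact (contDiff_const.add (innerSL ℝ ξ).contDiff).div_const 2
  · intro ξ hξ R hR
    have hξn : ‖ξ‖ = 1 := by
      simp only [Finset.mem_union, Finset.mem_image, Finset.mem_univ, true_and] at hξ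
      obtain ⟨i, rfl⟩ | ⟨i, rfl⟩ := hξ
      · exact hnorm i
      · rw [norm_neg]; exact hnorm i
    have := abs_real_inner_le_norm ξ R
    rw [hξn, hR, one_mul] at this
    have : (-1 : ℝ) ≤ inner ℝ ξ R := neg_le_of_abs_le this
    linarith
  · intro R hR
    have hdisj : Disjoint (Finset.univ.image e) (Finset.univ.image (fun i => -e i)) := by
      rw [Finset.disjoint_left]
      rintro x hx hx'
      simp only [Finset.mem_image, Finset.mem_univ, true_and] at hx hx'
      obtain ⟨i, rfl⟩ := hx
      obtain ⟨j, hj⟩ := hx'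
      have h1 := congrFun (congrArg (fun v : EuclideanSpace ℝ (Fin d) => (v : Fin d → ℝ)) hj) i
      rcases eq_or_ne i j with h | h
      · subst h; norm_num [he, EuclideanSpace.single_apply] at h1
      · norm_num [he, EuclideanSpace.single_apply, h] at h1
    have hinj : Function.Injective e := by
      intro i j hij
      have := congrFun (congrArg (fun v : EuclideanSpace ℝ (Fin d) => (v : Fin d → ℝ)) hij) i
      by_cases h : i = j
      · exact h
      · simp [he, EuclideanSpace.single_apply, h] at this
    have hinj' : Function.Injective (fun i => -e i) := fun i j h => hinj (neg_injective h)
    rw [Finset.sum_union hdisj, Finset.sum_image (fun i _ j _ h => hinj h),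
      Finset.sum_image (fun i _ j _ h => hinj' h)]
    have hinner : ∀ i, (inner ℝ (e i) R : ℝ) = R i := by
      intro i; simp [he, EuclideanSpace.inner_single_left]
    have hR' : R = ∑ i, R i • e i := by
      have h2 := (EuclideanSpace.basisFun (Fin d) ℝ).sum_repr R
      simpa [he, EuclideanSpace.basisFun_apply, EuclideanSpace.basisFun_repr] using h2.symm
    calc R = ∑ i, R i • e i := hR'
      _ = _ := by
        rw [← Finset.sum_add_distrib]
        refine Finset.sum_congr rfl fun i _ => ?_
        simp only [inner_neg_left, hinner, smul_neg, ← sub_eq_add_neg, ← sub_smul]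
        congr 1
        ring
end

section
/- (Improved Hölder inequality with fast oscillations) Let λ ∈ ℕ, p ∈ [1,∞), and let f, g : 𝕋^d → ℝ be smooth functions on the d-dimensional torus. Then ‖f(x) g(λx)‖_{L^p} ≤ ‖f‖_{L^p} ‖g‖_{L^p} + C(p) √d ‖f‖_{C¹} ‖g‖_{L^p} λ^{-1/p}, where C(p) is a constant depending only on p. -/
open MeasureTheory ENNReal Pointwise

/-- The fundamental domain `[0,1)^d` of the torus `𝕋^d`. -/
def torusBox (d : ℕ) : Set (Fin d → ℝ) := {x | ∀ i, x i ∈ Set.Ico (0 : ℝ) 1}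

lemma torusBox_eq_pi (d : ℕ) :
    torusBox d = Set.pi Set.univ (fun _ : Fin d => Set.Ico (0:ℝ) 1) := by
  ext x; simp [torusBox, Set.mem_pi]

lemma measurableSet_torusBox (d : ℕ) : MeasurableSet (torusBox d) := by
  rw [torusBox_eq_pi]; exact MeasurableSet.univ_pi fun i => measurableSet_Ico

lemma volume_torusBox (d : ℕ) : volume (torusBox d) = 1 := by
  rw [torusBox_eq_pi, volume_pi_pi]; simp

lemma torusBox_eq_fd (d : ℕ) :
    torusBox d = ZSpan.fundamentalDomain (Pi.basisFun ℝ (Fin d)) := by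
  ext x; simp [torusBox, ZSpan.fundamentalDomain]

lemma shift_lintegral (d : ℕ) (F : (Fin d → ℝ) → ℝ≥0∞)
    (hper : ∀ (n : Fin d → ℤ) (x : Fin d → ℝ), F (x + fun i => (n i : ℝ)) = F x)
    (s : Fin d → ℝ) :
    ∫⁻ x in torusBox d, F (x + s) = ∫⁻ x in torusBox d, F x := by
  classical
  set b := Pi.basisFun ℝ (Fin d) with hb
  have hfd : IsAddFundamentalDomain (Submodule.span ℤ (Set.range ⇑b)).toAddSubgroup
      (torusBox d) volume := by
    rw [torusBox_eq_fd]; exact ZSpan.isAddFundamentalDomain' b volume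
  have hinv : ∀ (g : (Submodule.span ℤ (Set.range ⇑b)).toAddSubgroup) (x : Fin d → ℝ),
      F (g +ᵥ x) = F x := by
    intro g x
    have hmem : (g : Fin d → ℝ) ∈ Submodule.span ℤ (Set.range ⇑b) := g.2
    choose n hn using fun i => (b.mem_span_iff_repr_mem ℤ (g : Fin d → ℝ)).mp hmem i
    have hg : (g : Fin d → ℝ) = fun i => (n i : ℝ) := by
      funext i
      have := hn i
      simpa [hb, Pi.basisFun_repr] using this.symm
    have h2 : g +ᵥ x = x + fun i => (n i : ℝ) := by
      show (g : Fin d → ℝ) + x = _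
      rw [hg, add_comm]
    rw [h2, hper]
  have hfd2 : IsAddFundamentalDomain (Submodule.span ℤ (Set.range ⇑b)).toAddSubgroup
      (s +ᵥ torusBox d) volume := hfd.vadd_of_comm s
  have hsub : ∫⁻ x in torusBox d, F (x + s) = ∫⁻ y in s +ᵥ torusBox d, F y := by
    have h1 := (measurePreserving_add_right volume s).setLIntegral_comp_emb
      (measurableEmbedding_addRight s) F (torusBox d)
    rw [h1]
    have hset : (fun x => x + s) '' torusBox d = s +ᵥ torusBox d := by
      ext y
      simp only [Set.mem_image, Set.mem_vadd_set]
      constructor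
      · rintro ⟨x, hx, rfl⟩; exact ⟨x, hx, by rw [vadd_eq_add, add_comm]⟩
      · rintro ⟨x, hx, rfl⟩; exact ⟨x, hx, by rw [vadd_eq_add, add_comm]⟩
    rw [hset]
  rw [hsub]
  have : Countable (Submodule.span ℤ (Set.range ⇑b)).toAddSubgroup :=
    inferInstanceAs (Countable (Submodule.span ℤ (Set.range ⇑b)))
  exact hfd2.setLIntegral_eq hfd F hinv

lemma eLpNorm_eq_lintegral_rpow_nnnorm {α : Type*} [MeasurableSpace α] {μ : Measure α}
    {p : ℝ≥0∞} (hp0 : p ≠ 0) (hpt : p ≠ ⊤) {f : α → ℝ} :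
    eLpNorm f p μ = (∫⁻ x, (‖f x‖₊ : ℝ≥0∞) ^ p.toReal ∂μ) ^ (1 / p.toReal) :=
  eLpNorm_eq_lintegral_rpow_enorm_toReal hp0 hpt

/-- Improved Hölder inequality with fast oscillations: for smooth periodic `f, g` on `𝕋^d`,
`‖f(x) g(λx)‖_{L^p} ≤ ‖f‖_{L^p} ‖g‖_{L^p} + C(p) √d ‖f‖_{C¹} ‖g‖_{L^p} λ^{-1/p}`. -/
theorem improved_holder (p : ℝ) (hp : 1 ≤ p) :
    ∃ C : ℝ, 0 < C ∧ ∀ (d lam : ℕ), 1 ≤ lam →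
      ∀ f g : (Fin d → ℝ) → ℝ, ContDiff ℝ (⊤ : ℕ∞) f → ContDiff ℝ (⊤ : ℕ∞) g →
      (∀ (n : Fin d → ℤ) (x : Fin d → ℝ), f (x + fun i => (n i : ℝ)) = f x) →
      (∀ (n : Fin d → ℤ) (x : Fin d → ℝ), g (x + fun i => (n i : ℝ)) = g x) →
      ∀ Kf : ℝ, (∀ x, |f x| + ‖fderiv ℝ f x‖ ≤ Kf) →
      eLpNorm (fun x => f x * g ((lam : ℝ) • x)) (ENNReal.ofReal p)
          (volume.restrict (torusBox d))
        ≤ eLpNorm f (ENNReal.ofReal p) (volume.restrict (torusBox d)) *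
            eLpNorm g (ENNReal.ofReal p) (volume.restrict (torusBox d))
          + ENNReal.ofReal (C * Real.sqrt d * Kf / (lam : ℝ) ^ (1 / p)) *
            eLpNorm g (ENNReal.ofReal p) (volume.restrict (torusBox d)) := by
  refine ⟨1, one_pos, ?_⟩
  intro d lam hlam f g hf hg hfper hgper Kf hKf
  have hp0 : 0 < p := lt_of_lt_of_le one_pos hp
  have hq0 : ENNReal.ofReal p ≠ 0 := by
    simp only [ne_eq, ENNReal.ofReal_eq_zero, not_le]; exact hp0
  have hqt : ENNReal.ofReal p ≠ ⊤ := ENNReal.ofReal_ne_top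
  have hqr : (ENNReal.ofReal p).toReal = p := ENNReal.toReal_ofReal hp0.le
  have hq1 : (1 : ℝ≥0∞) ≤ ENNReal.ofReal p := ENNReal.one_le_ofReal.mpr hp
  have hlamR : (1:ℝ) ≤ (lam:ℝ) := by exact_mod_cast hlam
  have hlam0 : (0:ℝ) < (lam:ℝ) := lt_of_lt_of_le zero_lt_one hlamR
  have hKf0 : 0 ≤ Kf := le_trans (by positivity) (hKf 0)
  have hfc : Continuous f := hf.continuous
  have hgc : Continuous g := hg.continuous
  set ν : Measure (Fin d → ℝ) := volume.restrict (torusBox d) with hν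
  set c : ℝ := (lam:ℝ)⁻¹ with hc
  -- auxiliary product functions
  set Gq : (Fin d → ℝ) × (Fin d → ℝ) → ℝ := fun z => g ((lam:ℝ) • z.1 + z.2) with hGq
  set F0 : (Fin d → ℝ) × (Fin d → ℝ) → ℝ := fun z => f (z.1 + c • z.2) * Gq z with hF0
  set F1 : (Fin d → ℝ) × (Fin d → ℝ) → ℝ := fun z => f z.1 * Gq z with hF1
  set F2 : (Fin d → ℝ) × (Fin d → ℝ) → ℝ :=
    fun z => (f (z.1 + c • z.2) - f z.1) * Gq z with hF2
  have hGqc : Continuous Gq := hgc.comp (by fun_prop)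
  have hF0c : Continuous F0 :=
    (hfc.comp (by fun_prop : Continuous fun z : (Fin d → ℝ) × (Fin d → ℝ) => z.1 + c • z.2)).mul hGqc
  have hF1c : Continuous F1 := (hfc.comp continuous_fst).mul hGqc
  have hF2c : Continuous F2 :=
    (((hfc.comp (by fun_prop : Continuous fun z : (Fin d → ℝ) × (Fin d → ℝ) => z.1 + c • z.2)).sub
      (hfc.comp continuous_fst))).mul hGqc
  -- pointwise ennreal powers
  set Φf : (Fin d → ℝ) → ℝ≥0∞ := fun x => (‖f x‖₊ : ℝ≥0∞) ^ p with hΦf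
  set Φg : (Fin d → ℝ) → ℝ≥0∞ := fun x => (‖g x‖₊ : ℝ≥0∞) ^ p with hΦg
  set Φfg : (Fin d → ℝ) → ℝ≥0∞ := fun x => (‖f x * g ((lam:ℝ) • x)‖₊ : ℝ≥0∞) ^ p with hΦfg
  have hΦfm : Measurable Φf := hfc.measurable.enorm.pow_const _
  have hΦgm : Measurable Φg := hgc.measurable.enorm.pow_const _
  have hΦfgm : Measurable Φfg :=
    ((hfc.mul (hgc.comp (by fun_prop : Continuous fun x : Fin d → ℝ => (lam:ℝ) • x))).measurable.enorm).pow_const _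
  -- nat-scaled periodicity of g
  have hglam : ∀ (n : Fin d → ℤ) (x : Fin d → ℝ),
      g ((lam:ℝ) • (x + fun i => (n i:ℝ))) = g ((lam:ℝ) • x) := by
    intro n x
    have h1 : (lam:ℝ) • (x + fun i => (n i:ℝ))
        = ((lam:ℝ) • x) + fun i => (((lam:ℤ) * n i : ℤ) : ℝ) := by
      funext i
      simp only [Pi.add_apply, Pi.smul_apply, smul_eq_mul]
      push_cast
      ring
    rw [h1, hgper]
  have hΦgper : ∀ (n : Fin d → ℤ) (x : Fin d → ℝ), Φg (x + fun i => (n i:ℝ)) = Φg x := by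
    intro n x; simp only [hΦg, hgper n x]
  have hΦfgper : ∀ (n : Fin d → ℤ) (x : Fin d → ℝ), Φfg (x + fun i => (n i:ℝ)) = Φfg x := by
    intro n x; simp only [hΦfg, hfper n x, hglam n x]
  -- the three integrals
  set If : ℝ≥0∞ := ∫⁻ x, Φf x ∂ν with hIf
  set Ig : ℝ≥0∞ := ∫⁻ x, Φg x ∂ν with hIg
  set Ifg : ℝ≥0∞ := ∫⁻ x, Φfg x ∂ν with hIfg
  have hνuniv : ν Set.univ = 1 := by
    rw [hν, Measure.restrict_apply_univ]; exact volume_torusBox d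
  have hlamc : ∀ t : Fin d → ℝ, (lam:ℝ) • (c • t) = t := by
    intro t; rw [smul_smul, hc, mul_inv_cancel₀ (ne_of_gt hlam0), one_smul]
  -- Step 1 : LHS equals eLpNorm of F0 over the product
  have step1 : eLpNorm (fun x => f x * g ((lam : ℝ) • x)) (ENNReal.ofReal p) ν
      = eLpNorm F0 (ENNReal.ofReal p) (ν.prod ν) := by
    rw [eLpNorm_eq_lintegral_rpow_nnnorm hq0 hqt, eLpNorm_eq_lintegral_rpow_nnnorm hq0 hqt, hqr]
    congr 1
    have hmeas : AEMeasurable (fun z => ((‖F0 z‖₊ : ℝ≥0∞)) ^ p) (ν.prod ν) :=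
      (hF0c.measurable.enorm.pow_const _).aemeasurable
    rw [lintegral_prod_symm _ hmeas]
    have inner : ∀ t : Fin d → ℝ, (∫⁻ x, (‖F0 (x, t)‖₊ : ℝ≥0∞) ^ p ∂ν) = Ifg := by
      intro t
      have hshape : ∀ x : Fin d → ℝ, (‖F0 (x, t)‖₊ : ℝ≥0∞) ^ p = Φfg (x + c • t) := by
        intro x
        have : (lam:ℝ) • (x + c • t) = (lam:ℝ) • x + t := by
          rw [smul_add, hlamc]
        simp only [hF0, hGq, hΦfg, this]
      simp_rw [hshape]
      exact shift_lintegral d Φfg hΦfgper (c • t)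
    rw [lintegral_congr inner, lintegral_const, hνuniv, mul_one]
  -- mul split of nnnorm powers
  have hsplit : ∀ (a b : ℝ), (‖a * b‖₊ : ℝ≥0∞) ^ p = (‖a‖₊ : ℝ≥0∞) ^ p * (‖b‖₊ : ℝ≥0∞) ^ p := by
    intro a b
    rw [nnnorm_mul, ENNReal.coe_mul, ENNReal.mul_rpow_of_nonneg _ _ hp0.le]
  -- Step 2 : eLpNorm F1 = eLpNorm f * eLpNorm g
  have gshape : ∀ x t : Fin d → ℝ, (‖g ((lam:ℝ) • x + t)‖₊ : ℝ≥0∞) ^ p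
      = Φg (t + (lam:ℝ) • x) := by
    intro x t; simp only [hΦg, add_comm]
  have ginner : ∀ x : Fin d → ℝ, (∫⁻ t, Φg (t + (lam:ℝ) • x) ∂ν) = Ig := fun x =>
    shift_lintegral d Φg hΦgper ((lam:ℝ) • x)
  have step2 : eLpNorm F1 (ENNReal.ofReal p) (ν.prod ν)
      = eLpNorm f (ENNReal.ofReal p) ν * eLpNorm g (ENNReal.ofReal p) ν := by
    rw [eLpNorm_eq_lintegral_rpow_nnnorm hq0 hqt, eLpNorm_eq_lintegral_rpow_nnnorm hq0 hqt,
      eLpNorm_eq_lintegral_rpow_nnnorm hq0 hqt, hqr]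
    have hmeas : AEMeasurable (fun z => ((‖F1 z‖₊ : ℝ≥0∞)) ^ p) (ν.prod ν) :=
      (hF1c.measurable.enorm.pow_const _).aemeasurable
    rw [lintegral_prod _ hmeas]
    have inner : ∀ x : Fin d → ℝ, (∫⁻ t, (‖F1 (x, t)‖₊ : ℝ≥0∞) ^ p ∂ν) = Φf x * Ig := by
      intro x
      have hshape : ∀ t : Fin d → ℝ, (‖F1 (x, t)‖₊ : ℝ≥0∞) ^ p
          = Φf x * Φg (t + (lam:ℝ) • x) := by
        intro t
        simp only [hF1, hGq]
        rw [hsplit, ← gshape x t]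
      simp_rw [hshape]
      have hm : Measurable fun t : Fin d → ℝ => Φg (t + (lam:ℝ) • x) :=
        hΦgm.comp (measurable_id'.add_const _)
      rw [lintegral_const_mul _ hm, ginner x]
    rw [lintegral_congr inner, lintegral_mul_const _ hΦfm,
      ← ENNReal.mul_rpow_of_nonneg _ _ (by positivity : (0:ℝ) ≤ 1/p)]
  -- Step 3 : eLpNorm Gq = eLpNorm g
  have step3 : eLpNorm Gq (ENNReal.ofReal p) (ν.prod ν) = eLpNorm g (ENNReal.ofReal p) ν := by
    rw [eLpNorm_eq_lintegral_rpow_nnnorm hq0 hqt, eLpNorm_eq_lintegral_rpow_nnnorm hq0 hqt, hqr]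
    congr 1
    have hmeas : AEMeasurable (fun z => ((‖Gq z‖₊ : ℝ≥0∞)) ^ p) (ν.prod ν) :=
      (hGqc.measurable.enorm.pow_const _).aemeasurable
    rw [lintegral_prod _ hmeas]
    have inner : ∀ x : Fin d → ℝ, (∫⁻ t, (‖Gq (x, t)‖₊ : ℝ≥0∞) ^ p ∂ν) = Ig := by
      intro x
      have hshape : ∀ t : Fin d → ℝ, (‖Gq (x, t)‖₊ : ℝ≥0∞) ^ p = Φg (t + (lam:ℝ) • x) := by
        intro t; simp only [hGq]; rw [← gshape x t]
      simp_rw [hshape]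
      exact ginner x
    rw [lintegral_congr inner, lintegral_const, hνuniv, mul_one]
  -- Step 4 : bound on F2
  set c' : ℝ := Kf * Real.sqrt d / (lam:ℝ) with hc'
  have hc'0 : 0 ≤ c' := by positivity
  have step4 : eLpNorm F2 (ENNReal.ofReal p) (ν.prod ν)
      ≤ ENNReal.ofReal c' * eLpNorm g (ENNReal.ofReal p) ν := by
    have hptwise : ∀ᵐ z ∂(ν.prod ν), ‖F2 z‖ ≤ ‖(c' • Gq) z‖ := by
      have hprod : ν.prod ν = (volume.prod volume).restrict
          ((torusBox d) ×ˢ (torusBox d)) := by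
        rw [hν, Measure.prod_restrict]
      rw [hprod]
      filter_upwards [ae_restrict_mem ((measurableSet_torusBox d).prod
        (measurableSet_torusBox d))] with z hz
      have hz2 : z.2 ∈ torusBox d := hz.2
      have hnorm2 : ‖z.2‖ ≤ Real.sqrt d := by
        refine (pi_norm_le_iff_of_nonneg (Real.sqrt_nonneg _)).mpr fun i => ?_
        have h1 : |z.2 i| ≤ 1 := by
          have := hz2 i
          rw [Set.mem_Ico] at this
          rw [abs_le]; constructor <;> linarith
        have h2 : (1:ℝ) ≤ Real.sqrt d := by
          rw [show (1:ℝ) = Real.sqrt 1 by simp]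
          apply Real.sqrt_le_sqrt
          exact_mod_cast Nat.one_le_iff_ne_zero.mpr (Nat.pos_iff_ne_zero.mp i.pos)
        calc ‖z.2 i‖ = |z.2 i| := rfl
          _ ≤ 1 := h1
          _ ≤ Real.sqrt d := h2
      have hmvt : |f (z.1 + c • z.2) - f z.1| ≤ Kf * ‖c • z.2‖ := by
        have := convex_univ.norm_image_sub_le_of_norm_fderiv_le
          (f := f) (fun x _ => hf.differentiable (by simp) x)
          (fun x _ => le_trans (le_add_of_nonneg_left (abs_nonneg _)) (hKf x))
          (Set.mem_univ z.1) (Set.mem_univ (z.1 + c • z.2))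
        simpa [add_sub_cancel_left] using this
      have hΔ : |f (z.1 + c • z.2) - f z.1| ≤ c' := by
        refine hmvt.trans ?_
        have h1 : ‖c • z.2‖ = (lam:ℝ)⁻¹ * ‖z.2‖ := by
          rw [norm_smul, Real.norm_eq_abs, hc, abs_of_nonneg (by positivity)]
        rw [h1, hc', div_eq_mul_inv]
        calc Kf * ((lam:ℝ)⁻¹ * ‖z.2‖) = Kf * ‖z.2‖ * (lam:ℝ)⁻¹ := by ring
          _ ≤ Kf * Real.sqrt d * (lam:ℝ)⁻¹ :=
              mul_le_mul_of_nonneg_right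
                (mul_le_mul_of_nonneg_left hnorm2 hKf0) (by positivity)
      calc ‖F2 z‖ = |f (z.1 + c • z.2) - f z.1| * |Gq z| := by
            rw [hF2]; simp [abs_mul]
        _ ≤ c' * |Gq z| := mul_le_mul_of_nonneg_right hΔ (abs_nonneg _)
        _ = ‖(c' • Gq) z‖ := by
            simp [Pi.smul_apply, norm_smul, Real.norm_eq_abs, abs_of_nonneg hc'0]
    calc eLpNorm F2 (ENNReal.ofReal p) (ν.prod ν)
        ≤ eLpNorm (c' • Gq) (ENNReal.ofReal p) (ν.prod ν) := eLpNorm_mono_ae hptwise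
      _ = (‖c'‖₊ : ℝ≥0∞) * eLpNorm Gq (ENNReal.ofReal p) (ν.prod ν) := by
          rw [eLpNorm_const_smul, enorm_eq_nnnorm]
      _ = ENNReal.ofReal c' * eLpNorm g (ENNReal.ofReal p) ν := by
          rw [step3, ← enorm_eq_nnnorm, ← ofReal_norm_eq_enorm, Real.norm_eq_abs, abs_of_nonneg hc'0]
  -- Step 5 : decomposition and triangle inequality
  have hdecomp : F0 = F1 + F2 := by
    funext z
    simp only [hF0, hF1, hF2, Pi.add_apply]
    ring
  have htri : eLpNorm F0 (ENNReal.ofReal p) (ν.prod ν)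
      ≤ eLpNorm F1 (ENNReal.ofReal p) (ν.prod ν) + eLpNorm F2 (ENNReal.ofReal p) (ν.prod ν) := by
    rw [hdecomp]
    exact eLpNorm_add_le hF1c.aestronglyMeasurable hF2c.aestronglyMeasurable hq1
  -- Step 6 : final constant comparison
  have hconst : ENNReal.ofReal c' ≤ ENNReal.ofReal (1 * Real.sqrt d * Kf / (lam:ℝ) ^ (1/p)) := by
    apply ENNReal.ofReal_le_ofReal
    rw [one_mul, hc']
    rw [mul_comm Kf (Real.sqrt d)]
    have hle : (lam:ℝ) ^ (1/p) ≤ (lam:ℝ) := by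
      nth_rewrite 2 [show (lam:ℝ) = (lam:ℝ) ^ (1:ℝ) by rw [Real.rpow_one]]
      exact Real.rpow_le_rpow_of_exponent_le hlamR ((div_le_one hp0).mpr hp)
    have hpos : (0:ℝ) < (lam:ℝ) ^ (1/p) := Real.rpow_pos_of_pos hlam0 _
    gcongr
  calc eLpNorm (fun x => f x * g ((lam : ℝ) • x)) (ENNReal.ofReal p) ν
      = eLpNorm F0 (ENNReal.ofReal p) (ν.prod ν) := step1
    _ ≤ eLpNorm F1 (ENNReal.ofReal p) (ν.prod ν) + eLpNorm F2 (ENNReal.ofReal p) (ν.prod ν) :=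
        htri
    _ ≤ eLpNorm f (ENNReal.ofReal p) ν * eLpNorm g (ENNReal.ofReal p) ν
        + ENNReal.ofReal c' * eLpNorm g (ENNReal.ofReal p) ν := by
        rw [step2]; exact add_le_add_right step4 _
    _ ≤ eLpNorm f (ENNReal.ofReal p) ν * eLpNorm g (ENNReal.ofReal p) ν
        + ENNReal.ofReal (1 * Real.sqrt d * Kf / (lam:ℝ) ^ (1/p)) *
          eLpNorm g (ENNReal.ofReal p) ν := by
        exact add_le_add_right (mul_le_mul_left hconst _) _
end

section
/- Let d ≥ 3, 0 < ρ < 1/4, and let Λ ⊆ S^{d−1} ∩ ℚ^d be a finite set of rational unit directions. Then there exists μ₀ > 0 and vectors {v_ξ}_{ξ∈Λ} ⊆ ℝ^d such that for every μ ≥ μ₀ the periodized cylinders v_ξ + B_{2ρμ^{-1}} + ℝξ + ℤ^d are pairwise disjoint as ξ varies in Λ. -/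
/-!
For distinct rational directions `ξ, ξ'` in dimension `d ≥ 3` there is a nonzero integer vector
`w` orthogonal to both. The functional `⟪w, ·⟫` kills `ξ, ξ'` and is integral on `ℤ^d`, so it maps
the cylinder of radius `r` around `v` into `⟪w, v⟫ + ℤ + [-r‖w‖, r‖w‖]`. For generic shifts
(the bad ones form a null set) `⟪w, v_ξ - v_ξ'⟫ ∉ ℤ`, and the two images are disjoint once `r`
is small, i.e. once `μ` is large.
-/

open MeasureTheory Filter Topology Matrix

theorem exists_ne_zero_int_vec_mulVec_eq_zero {m n : Type*} [Fintype m] [Fintype n]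
    (A : Matrix m n ℚ) (h : Fintype.card m < Fintype.card n) :
    ∃ c : n → ℤ, c ≠ 0 ∧ A *ᵥ (fun i => (c i : ℚ)) = 0 := by
  obtain ⟨x, hx, hx0⟩ := (Submodule.ne_bot_iff _).1 <|
    LinearMap.ker_ne_bot_of_finrank_lt (f := A.mulVecLin) (by simpa using h)
  obtain ⟨b, hb⟩ := IsLocalization.exist_integer_multiples_of_finite (nonZeroDivisors ℤ) x
  choose c hc using hb
  have hcx : (fun i => (c i : ℚ)) = (b : ℤ) • x := funext hc
  refine ⟨c, fun h0 => hx0 ?_, ?_⟩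
  · refine (smul_eq_zero.1 (hcx.symm.trans ?_)).resolve_left (nonZeroDivisors.coe_ne_zero b)
    ext; simp [h0]
  · rw [hcx, Matrix.mulVec_smul, ← Matrix.mulVecLin_apply, LinearMap.mem_ker.1 hx, smul_zero]

open RealInnerProductSpace

section Generic

variable {E : Type*} [NormedAddCommGroup E] [InnerProductSpace ℝ E] [FiniteDimensional ℝ E]
  [MeasurableSpace E] [BorelSpace E]

theorem ae_inner_notMem_of_countable {a : E} (ha : a ≠ 0) {T : Set ℝ} (hT : T.Countable) :
    ∀ᵐ z ∂(Measure.addHaar : Measure E), ⟪a, z⟫ ∉ T := by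
  have hsurj : Function.Surjective (innerₛₗ ℝ a) := fun y =>
    ⟨(y / ‖a‖ ^ 2) • a, by simp [ha]⟩
  exact (ae_comp_linearMap_mem_iff (innerₛₗ ℝ a) _ volume hsurj hT.measurableSet.compl).2
    (hT.ae_notMem volume)

theorem exists_forall_inner_notMem {ι : Type*} (s : Finset ι) {a : ι → E}
    (ha : ∀ i ∈ s, a i ≠ 0) {T : ι → Set ℝ} (hT : ∀ i ∈ s, (T i).Countable) :
    ∃ z : E, ∀ i ∈ s, ⟪a i, z⟫ ∉ T i :=
  ((eventually_all_finset s).2 fun i hi =>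
    ae_inner_notMem_of_countable (ha i hi) (hT i hi)).exists

theorem exists_inner_sub_notMem_range_intCast (Λ : Finset E) {w : E → E → E}
    (hw : ∀ ξ ∈ Λ, ∀ ξ' ∈ Λ, ξ ≠ ξ' → w ξ ξ' ≠ 0) :
    ∃ v : E → E, ∀ ξ ∈ Λ, ∀ ξ' ∈ Λ, ξ ≠ ξ' → ⟪w ξ ξ', v ξ - v ξ'⟫ ∉ Set.range Int.cast := by
  classical
  -- `v ξ = ⟪a, ξ⟫ • z`: `a` separates the points of `Λ`, then `z` is generic for the
  -- functionals `⟪a, ξ - ξ'⟫ • w ξ ξ'`.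
  obtain ⟨a, ha⟩ : ∃ a : E, ∀ p ∈ Λ.offDiag, ⟪p.1 - p.2, a⟫ ∉ ({0} : Set ℝ) :=
    exists_forall_inner_notMem _ (fun p hp => sub_ne_zero.2 (Finset.mem_offDiag.1 hp).2.2)
      fun _ _ => Set.countable_singleton 0
  obtain ⟨z, hz⟩ : ∃ z : E, ∀ p ∈ Λ.offDiag,
      ⟪⟪a, p.1 - p.2⟫ • w p.1 p.2, z⟫ ∉ Set.range ((↑) : ℤ → ℝ) := by
    refine exists_forall_inner_notMem _ (fun p hp => smul_ne_zero ?_ ?_)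
      fun _ _ => Set.countable_range _
    · simpa [real_inner_comm] using ha p hp
    · obtain ⟨h₁, h₂, hne⟩ := Finset.mem_offDiag.1 hp
      exact hw _ h₁ _ h₂ hne
  refine ⟨fun ξ => ⟪a, ξ⟫ • z, fun ξ hξ ξ' hξ' hne => ?_⟩
  simpa [← sub_smul, inner_smul_left, inner_smul_right, inner_sub_right, mul_comm] using
    hz (ξ, ξ') (Finset.mem_offDiag.2 ⟨hξ, hξ', hne⟩)

end Generic

section Lattice

variable {d : ℕ}

noncomputable def intVec (n : Fin d → ℤ) : EuclideanSpace ℝ (Fin d) :=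
  (WithLp.equiv 2 (Fin d → ℝ)).symm (fun i => (n i : ℝ))

theorem inner_intVec_intVec (c n : Fin d → ℤ) :
    ⟪intVec c, intVec n⟫ = ((∑ i, c i * n i : ℤ) : ℝ) := by
  simp [intVec, PiLp.inner_apply, mul_comm]

theorem intVec_ne_zero {c : Fin d → ℤ} (hc : c ≠ 0) : intVec c ≠ 0 := by
  contrapose! hc
  ext i
  simpa [intVec] using congrArg (· i) hc

theorem inner_intVec_eq_zero_of_dotProduct_eq_zero {c : Fin d → ℤ} {q : Fin d → ℚ}
    (hq : q ⬝ᵥ (fun i => (c i : ℚ)) = 0) (ξ : EuclideanSpace ℝ (Fin d)) (hξ : ∀ i, ξ i = q i) :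
    ⟪intVec c, ξ⟫ = 0 := by
  have := congrArg (Rat.cast : ℚ → ℝ) hq
  simp only [dotProduct, Rat.cast_sum, Rat.cast_mul, Rat.cast_intCast, Rat.cast_zero] at this
  simpa [intVec, PiLp.inner_apply, hξ] using this

theorem exists_intVec_ne_zero_inner_eq_zero (hd : 2 < d) {ξ ξ' : EuclideanSpace ℝ (Fin d)}
    (hξ : ∀ i, ∃ q : ℚ, ξ i = q) (hξ' : ∀ i, ∃ q : ℚ, ξ' i = q) :
    ∃ c : Fin d → ℤ, c ≠ 0 ∧ ⟪intVec c, ξ⟫ = 0 ∧ ⟪intVec c, ξ'⟫ = 0 := by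
  choose q hq using hξ
  choose q' hq' using hξ'
  obtain ⟨c, hc0, hc⟩ := exists_ne_zero_int_vec_mulVec_eq_zero (Matrix.of ![q, q'])
    (by simpa using hd)
  exact ⟨c, hc0, inner_intVec_eq_zero_of_dotProduct_eq_zero (congrFun hc 0) ξ hq,
    inner_intVec_eq_zero_of_dotProduct_eq_zero (congrFun hc 1) ξ' hq'⟩

def periodizedCylinder (v ξ : EuclideanSpace ℝ (Fin d)) (r : ℝ) : Set (EuclideanSpace ℝ (Fin d)) :=
  {x | ∃ (t : ℝ) (b : EuclideanSpace ℝ (Fin d)) (n : Fin d → ℤ), ‖b‖ < r ∧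
    x = v + b + t • ξ + intVec n}

theorem exists_int_abs_inner_sub_le {c : Fin d → ℤ} {v ξ x : EuclideanSpace ℝ (Fin d)} {r : ℝ}
    (hξ : ⟪intVec c, ξ⟫ = 0) (hx : x ∈ periodizedCylinder v ξ r) :
    ∃ k : ℤ, |⟪intVec c, x⟫ - ⟪intVec c, v⟫ - k| ≤ r * ‖intVec c‖ := by
  obtain ⟨t, b, n, hb, rfl⟩ := hx
  refine ⟨∑ i, c i * n i, ?_⟩
  calc |⟪intVec c, v + b + t • ξ + intVec n⟫ - ⟪intVec c, v⟫ - ↑(∑ i, c i * n i)|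
      = |⟪intVec c, b⟫| := by
        simp only [inner_add_right, inner_smul_right, hξ, inner_intVec_intVec]
        congr 1; ring
    _ ≤ ‖intVec c‖ * ‖b‖ := abs_real_inner_le_norm _ _
    _ ≤ r * ‖intVec c‖ := by rw [mul_comm]; gcongr

theorem disjoint_periodizedCylinder_of_lt {c : Fin d → ℤ} {v v' ξ ξ' : EuclideanSpace ℝ (Fin d)}
    {r : ℝ} (hξ : ⟪intVec c, ξ⟫ = 0) (hξ' : ⟪intVec c, ξ'⟫ = 0)
    (hr : 2 * r * ‖intVec c‖ < |⟪intVec c, v - v'⟫ - round ⟪intVec c, v - v'⟫|) :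
    Disjoint (periodizedCylinder v ξ r) (periodizedCylinder v' ξ' r) := by
  refine Set.disjoint_left.2 fun x hx hx' => hr.not_ge ?_
  obtain ⟨k, hk⟩ := exists_int_abs_inner_sub_le hξ hx
  obtain ⟨k', hk'⟩ := exists_int_abs_inner_sub_le hξ' hx'
  calc |⟪intVec c, v - v'⟫ - round ⟪intVec c, v - v'⟫|
      ≤ |⟪intVec c, v - v'⟫ - ↑(k' - k)| := round_le _ _
    _ = |(⟪intVec c, x⟫ - ⟪intVec c, v'⟫ - k') - (⟪intVec c, x⟫ - ⟪intVec c, v⟫ - k)| := by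
        rw [inner_sub_right, Int.cast_sub]; ring_nf
    _ ≤ |⟪intVec c, x⟫ - ⟪intVec c, v'⟫ - k'| + |⟪intVec c, x⟫ - ⟪intVec c, v⟫ - k| :=
        abs_sub _ _
    _ ≤ 2 * r * ‖intVec c‖ := by linarith

theorem eventually_disjoint_periodizedCylinder {c : Fin d → ℤ}
    {v v' ξ ξ' : EuclideanSpace ℝ (Fin d)} (hξ : ⟪intVec c, ξ⟫ = 0) (hξ' : ⟪intVec c, ξ'⟫ = 0)
    (hv : ⟪intVec c, v - v'⟫ ∉ Set.range Int.cast) :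
    ∀ᶠ r in 𝓝 0, Disjoint (periodizedCylinder v ξ r) (periodizedCylinder v' ξ' r) := by
  have hgap : 0 < |⟪intVec c, v - v'⟫ - round ⟪intVec c, v - v'⟫| :=
    abs_pos.2 (sub_ne_zero.2 fun h => hv ⟨_, h.symm⟩)
  have hlim : Tendsto (fun r : ℝ => 2 * r * ‖intVec c‖) (𝓝 0) (𝓝 0) := by
    simpa using ((continuous_id.const_mul 2).mul_const ‖intVec c‖).tendsto (0 : ℝ)
  filter_upwards [hlim.eventually (gt_mem_nhds hgap)] with r hr
  exact disjoint_periodizedCylinder_of_lt hξ hξ' hr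

end Lattice

theorem disjoint_periodized_cylinders_general (d : ℕ) (hd : 3 ≤ d) (ρ : ℝ)
    (Λ : Finset (EuclideanSpace ℝ (Fin d)))
    (hΛ : ∀ ξ ∈ Λ, ‖ξ‖ = 1 ∧ ∀ i, ∃ q : ℚ, ξ i = (q : ℝ)) :
    ∃ μ₀ : ℝ, 0 < μ₀ ∧ ∃ v : EuclideanSpace ℝ (Fin d) → EuclideanSpace ℝ (Fin d),
      ∀ μ : ℝ, μ₀ ≤ μ → ∀ ξ ∈ Λ, ∀ ξ' ∈ Λ, ξ ≠ ξ' →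
        Disjoint
          {x : EuclideanSpace ℝ (Fin d) | ∃ (t : ℝ) (b : EuclideanSpace ℝ (Fin d))
            (n : Fin d → ℤ), ‖b‖ < 2 * ρ / μ ∧
            x = v ξ + b + t • ξ + (WithLp.equiv 2 (Fin d → ℝ)).symm (fun i => (n i : ℝ))}
          {x : EuclideanSpace ℝ (Fin d) | ∃ (t : ℝ) (b : EuclideanSpace ℝ (Fin d))
            (n : Fin d → ℤ), ‖b‖ < 2 * ρ / μ ∧
            x = v ξ' + b + t • ξ' + (WithLp.equiv 2 (Fin d → ℝ)).symm (fun i => (n i : ℝ))} := by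
  have hc : ∀ ξ ∈ Λ, ∀ ξ' ∈ Λ, ∃ c : Fin d → ℤ, c ≠ 0 ∧ ⟪intVec c, ξ⟫ = 0 ∧ ⟪intVec c, ξ'⟫ = 0 :=
    fun ξ hξ ξ' hξ' => exists_intVec_ne_zero_inner_eq_zero hd (hΛ ξ hξ).2 (hΛ ξ' hξ').2
  choose! c hc0 hcξ hcξ' using hc
  obtain ⟨v, hv⟩ := exists_inner_sub_notMem_range_intCast Λ (w := fun ξ ξ' => intVec (c ξ ξ'))
    fun ξ hξ ξ' hξ' _ => intVec_ne_zero (hc0 ξ hξ ξ' hξ')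
  have hr : Tendsto (fun μ : ℝ => 2 * ρ / μ) atTop (𝓝 0) :=
    tendsto_const_nhds.div_atTop tendsto_id
  have hev : ∀ᶠ μ in atTop, ∀ ξ ∈ Λ, ∀ ξ' ∈ Λ, ξ ≠ ξ' →
      Disjoint (periodizedCylinder (v ξ) ξ (2 * ρ / μ))
        (periodizedCylinder (v ξ') ξ' (2 * ρ / μ)) := by
    simp only [eventually_all_finset, eventually_imp_distrib_left]
    exact fun ξ hξ ξ' hξ' hne => hr.eventually <|
      eventually_disjoint_periodizedCylinder (hcξ ξ hξ ξ' hξ') (hcξ' ξ hξ ξ' hξ')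
        (hv ξ hξ ξ' hξ' hne)
  obtain ⟨μ₁, hμ₁⟩ := eventually_atTop.1 hev
  exact ⟨max μ₁ 1, by positivity, v, fun μ hμ => hμ₁ μ (le_of_max_le_left hμ)⟩

/-- Disjoint periodized cylinders: for `d ≥ 3`, `0 < ρ < 1/4` and a finite set `Λ` of
rational unit directions, there are `μ₀ > 0` and shifts `v_ξ` such that for all `μ ≥ μ₀`
the periodized cylinders `v_ξ + B_{2ρ/μ} + ℝξ + ℤ^d`, `ξ ∈ Λ`, are pairwise disjoint. -/
theorem disjoint_periodized_cylinders (d : ℕ) (hd : 3 ≤ d) (ρ : ℝ)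
    (hρ0 : 0 < ρ) (hρ : ρ < 1 / 4)
    (Λ : Finset (EuclideanSpace ℝ (Fin d)))
    (hΛ : ∀ ξ ∈ Λ, ‖ξ‖ = 1 ∧ ∀ i, ∃ q : ℚ, ξ i = (q : ℝ)) :
    ∃ μ₀ : ℝ, 0 < μ₀ ∧ ∃ v : EuclideanSpace ℝ (Fin d) → EuclideanSpace ℝ (Fin d),
      ∀ μ : ℝ, μ₀ ≤ μ → ∀ ξ ∈ Λ, ∀ ξ' ∈ Λ, ξ ≠ ξ' →
        Disjoint
          {x : EuclideanSpace ℝ (Fin d) | ∃ (t : ℝ) (b : EuclideanSpace ℝ (Fin d))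
            (n : Fin d → ℤ), ‖b‖ < 2 * ρ / μ ∧
            x = v ξ + b + t • ξ + (WithLp.equiv 2 (Fin d → ℝ)).symm (fun i => (n i : ℝ))}
          {x : EuclideanSpace ℝ (Fin d) | ∃ (t : ℝ) (b : EuclideanSpace ℝ (Fin d))
            (n : Fin d → ℤ), ‖b‖ < 2 * ρ / μ ∧
            x = v ξ' + b + t • ξ' + (WithLp.equiv 2 (Fin d → ℝ)).symm (fun i => (n i : ℝ))} :=
  disjoint_periodized_cylinders_general d hd ρ Λ hΛ
end
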